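/- arXiv:1304.0832 — 3 statements merged into one kernel-verified Lean document; each statement's English description precedes it below -/
import Mathlib

section
/- Let μ : ℝ → ℝ with μ(0) < 0, λ ↦ λ² − μ(λ) strictly convex and continuous on [0,∞), and (λ² − μ(λ))/λ → +∞ as λ → +∞. Then the equation λ² − μ(λ) − c*λ = 0, where c* = inf_{λ>0} (λ² − μ(λ))/λ, admits a unique positive solution λ*. -/
open Real Filter Set Topology

/-! With g(λ) = λ² − μ(λ), the quotient g(λ)/λ tends to +∞ at both ends of (0, ∞) (at 0⁺ because
g(0) = −μ(0) > 0), so it attains its infimum c* at some λ* > 0, which solves g(λ) = c* λ. Every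
positive solution is a zero, hence a minimiser on (0, ∞), of the strictly convex function
g(λ) − c* λ, which is nonnegative there; a strictly convex function has at most one minimiser. -/

theorem exists_isMinOn_Ioi_of_tendsto_atTop {β : Type*} [LinearOrder β] [TopologicalSpace β]
    [ClosedIicTopology β] {f : ℝ → β} {a : ℝ} (hf : ContinuousOn f (Ioi a))
    (hleft : Tendsto f (𝓝[>] a) atTop) (hright : Tendsto f atTop atTop) :
    ∃ x ∈ Ioi a, IsMinOn f (Ioi a) x := by
  set x₀ := a + 1
  have hx₀ : a < x₀ := lt_add_one a
  obtain ⟨u, hau, hu⟩ := mem_nhdsGT_iff_exists_Ioo_subset.1 (hleft.eventually_ge_atTop (f x₀))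
  obtain ⟨B, hB⟩ := eventually_atTop.1 (hright.eventually_ge_atTop (f x₀))
  have hK : Icc (min u x₀) (max B x₀) ⊆ Ioi a := fun l hl => (lt_min hau hx₀).trans_le hl.1
  obtain ⟨x, hxK, hxmin⟩ := isCompact_Icc.exists_isMinOn
    ⟨x₀, min_le_right _ _, le_max_right _ _⟩ (hf.mono hK)
  refine ⟨x, hK hxK, fun l (hl : a < l) => ?_⟩
  have hxx₀ : f x ≤ f x₀ := hxmin ⟨min_le_right _ _, le_max_right _ _⟩
  rcases lt_or_ge l (min u x₀) with hlu | hlu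
  · exact hxx₀.trans (hu ⟨hl, hlu.trans_le (min_le_left _ _)⟩)
  rcases le_or_gt l (max B x₀) with hlB | hlB
  · exact hxmin ⟨hlu, hlB⟩
  · exact hxx₀.trans (hB l ((le_max_left _ _).trans hlB.le))

theorem tendsto_div_nhdsGT_zero_atTop_of_pos {g : ℝ → ℝ} {b : ℝ}
    (hg : Tendsto g (𝓝[>] 0) (𝓝 b)) (hb : 0 < b) :
    Tendsto (fun l => g l / l) (𝓝[>] 0) atTop := by
  simpa only [div_eq_mul_inv] using hg.pos_mul_atTop hb tendsto_inv_nhdsGT_zero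

theorem StrictConvexOn.eq_of_eq_of_mul_le {s : Set ℝ} {g : ℝ → ℝ} {c x y : ℝ}
    (hg : StrictConvexOn ℝ s g) (hle : ∀ l ∈ s, c * l ≤ g l)
    (hx : x ∈ s) (hy : y ∈ s) (hgx : g x = c * x) (hgy : g y = c * y) : x = y := by
  have hsub : StrictConvexOn ℝ s (fun l => g l - c * l) :=
    hg.sub_concaveOn (LinearMap.concaveOn (LinearMap.mulLeft ℝ c) hg.1)
  have hmin : ∀ z ∈ s, g z = c * z → IsMinOn (fun l => g l - c * l) s z := fun z _ hz l hl => by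
    simpa only [mem_ofPred_eq, hz, sub_self, sub_nonneg] using hle l hl
  exact hsub.eq_of_isMinOn (hmin x hx hgx) (hmin y hy hgy) hx hy

theorem stmt2 (μ : ℝ → ℝ) (hμ0 : μ 0 < 0)
    (hconv : StrictConvexOn ℝ (Set.Ici 0) (fun l => l^2 - μ l))
    (hcont : ContinuousOn (fun l => l^2 - μ l) (Set.Ici 0))
    (htend : Tendsto (fun l => (l^2 - μ l) / l) atTop atTop) :
    ∃! lstar : ℝ, 0 < lstar ∧
      lstar^2 - μ lstar - sInf ((fun l => (l^2 - μ l) / l) '' Set.Ioi 0) * lstar = 0 := by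
  set g : ℝ → ℝ := fun l => l^2 - μ l
  have hg0 : 0 < g 0 := by simpa [g] using hμ0
  have hleft : Tendsto (fun l => g l / l) (𝓝[>] 0) atTop :=
    tendsto_div_nhdsGT_zero_atTop_of_pos ((hcont 0 self_mem_Ici).mono_left
      (nhdsWithin_mono _ Ioi_subset_Ici_self)) hg0
  have hquot : ContinuousOn (fun l => g l / l) (Ioi 0) :=
    (hcont.mono Ioi_subset_Ici_self).div continuousOn_id fun _ hl => hl.ne'
  obtain ⟨x, hx, hmin⟩ := exists_isMinOn_Ioi_of_tendsto_atTop hquot hleft htend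
  have hc : sInf ((fun l => g l / l) '' Ioi 0) = g x / x :=
    IsLeast.csInf_eq ⟨mem_image_of_mem _ hx, forall_mem_image.2 fun l hl => hmin hl⟩
  have hle : ∀ l ∈ Ioi 0, g x / x * l ≤ g l := fun l hl => (le_div_iff₀ hl).1 (hmin hl)
  have hgx : g x = g x / x * x := (div_mul_cancel₀ _ hx.ne').symm
  rw [hc]
  refine ⟨x, ⟨hx, sub_eq_zero.2 hgx⟩, fun y ⟨hy, hgy⟩ => ?_⟩
  exact (hconv.subset Ioi_subset_Ici_self (convex_Ioi 0)).eq_of_eq_of_mul_le hle hy hx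
    (sub_eq_zero.1 hgy) hgx
end

section
/- Let a : ℝ → ℝ be bounded with ‖a‖_∞ ≤ M, λ* > 0, c' > 0 with λ*² − c'λ* = −M and M ≥ λ*². Let C, R, y, K₀ > 0 with K₀ = max{C, 2M}. Then w̄₁(t,x) := K₀·min{1, e^{−λ*x}}·t·e^{λ*(R − y + c't)} satisfies, for all t > 0 and x ≠ 0: ∂_t w̄₁ − ∂_{xx} w̄₁ − a(x)·w̄₁ ≥ min{2M, C e^{−2λ*x}}·e^{λ*(x + R − y + c't)}. -/
open Real Filter Set Topology

/-!
Away from `x = 0` the spatial factor `min 1 (exp (-λ* x))` is locally either `1` or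
`exp (-λ* x)`, so its second derivative is `0` resp. `λ*² exp (-λ* x)`. The time derivative of
`t exp (λ* c' t)` contributes `(1 + λ* c' t) exp (λ* c' t)`, and since `λ* c' = λ*² + M ≥ λ*² + a x`
the terms carrying the factor `t` are nonnegative. What remains is the zeroth-order term
`K₀ min 1 (exp (-λ* x))`, which dominates `2M exp (λ* x)` for `x < 0` and
`C exp (-λ* x)` for `x > 0`.
-/

lemma deriv_mul_exp_mul_add (A l b c t : ℝ) :
    deriv (fun s => A * s * exp (l * (b + c * s))) t
      = A * exp (l * (b + c * t)) * (1 + l * c * t) := by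
  have hexp : HasDerivAt (fun s => exp (l * (b + c * s))) (exp (l * (b + c * t)) * (l * c)) t := by
    simpa using (((hasDerivAt_id t).const_mul c).const_add b).const_mul l |>.exp
  have hlin : HasDerivAt (fun s => A * s) A t := by simpa using (hasDerivAt_id' t).const_mul A
  have h : HasDerivAt (fun s => A * s * exp (l * (b + c * s)))
      (A * exp (l * (b + c * t)) + A * t * (exp (l * (b + c * t)) * (l * c))) t :=
    hlin.mul hexp
  rw [h.deriv]
  ring

lemma deriv_exp_neg_mul (l : ℝ) : deriv (fun z => exp (-l * z)) = fun z => -l * exp (-l * z) := by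
  funext z
  have h : HasDerivAt (fun z => exp (-l * z)) (exp (-l * z) * -l) z := by
    simpa using ((hasDerivAt_id' z).const_mul (-l)).exp
  rw [h.deriv, mul_comm]

lemma min_one_exp_neg_mul_of_nonpos {l x : ℝ} (hl : 0 ≤ l) (hx : x ≤ 0) :
    min 1 (exp (-l * x)) = 1 :=
  min_eq_left (one_le_exp (by nlinarith))

lemma min_one_exp_neg_mul_of_nonneg {l x : ℝ} (hl : 0 ≤ l) (hx : 0 ≤ x) :
    min 1 (exp (-l * x)) = exp (-l * x) :=
  min_eq_right (exp_le_one_iff.mpr (by nlinarith))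

lemma deriv_deriv_min_one_exp_neg_mul_of_neg {l x : ℝ} (hl : 0 ≤ l) (hx : x < 0) :
    deriv (deriv fun z => min 1 (exp (-l * z))) x = 0 := by
  have hconst : (fun z => min 1 (exp (-l * z))) =ᶠ[𝓝 x] fun _ => 1 := by
    filter_upwards [Iio_mem_nhds hx] with z hz
    exact min_one_exp_neg_mul_of_nonpos hl (le_of_lt hz)
  rw [hconst.deriv.deriv_eq]
  simp

lemma deriv_deriv_min_one_exp_neg_mul_of_pos {l x : ℝ} (hl : 0 ≤ l) (hx : 0 < x) :
    deriv (deriv fun z => min 1 (exp (-l * z))) x = l ^ 2 * exp (-l * x) := by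
  have hexp : (fun z => min 1 (exp (-l * z))) =ᶠ[𝓝 x] fun z => exp (-l * z) := by
    filter_upwards [Ioi_mem_nhds hx] with z hz
    exact min_one_exp_neg_mul_of_nonneg hl (le_of_lt hz)
  rw [hexp.deriv.deriv_eq, deriv_exp_neg_mul, deriv_const_mul_field', deriv_exp_neg_mul]
  ring

lemma min_mul_exp_le_of_nonpos {M C l x : ℝ} (hM : 0 ≤ M) (hl : 0 ≤ l) (hx : x ≤ 0) :
    min (2 * M) (C * exp (-2 * l * x)) * exp (l * x) ≤ 2 * M :=
  calc min (2 * M) (C * exp (-2 * l * x)) * exp (l * x) ≤ 2 * M * exp (l * x) := by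
        gcongr; exact min_le_left _ _
    _ ≤ 2 * M := mul_le_of_le_one_right (by linarith) (exp_le_one_iff.mpr (by nlinarith))

lemma min_mul_exp_le (M C l x : ℝ) :
    min (2 * M) (C * exp (-2 * l * x)) * exp (l * x) ≤ C * exp (-l * x) :=
  calc min (2 * M) (C * exp (-2 * l * x)) * exp (l * x) ≤ C * exp (-2 * l * x) * exp (l * x) := by
        gcongr; exact min_le_right _ _
    _ = C * exp (-l * x) := by rw [mul_assoc, ← exp_add]; ring_nf

theorem stmt16_general (a : ℝ → ℝ) (M lstar c' C R y : ℝ)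
    (hM : ∀ x, |a x| ≤ M) (hls : 0 < lstar)
    (hc' : lstar^2 - c' * lstar = -M) :
    ∀ t : ℝ, 0 < t → ∀ x : ℝ, x ≠ 0 →
      min (2 * M) (C * Real.exp (-2 * lstar * x)) * Real.exp (lstar * (x + R - y + c' * t))
        ≤ deriv (fun s => max C (2 * M) * min 1 (Real.exp (-lstar * x)) * s
              * Real.exp (lstar * (R - y + c' * s))) t
          - deriv (deriv (fun z => max C (2 * M) * min 1 (Real.exp (-lstar * z)) * t
              * Real.exp (lstar * (R - y + c' * t)))) x
          - a x * (max C (2 * M) * min 1 (Real.exp (-lstar * x)) * t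
              * Real.exp (lstar * (R - y + c' * t))) := by
  intro t ht x hx
  rw [deriv_mul_exp_mul_add]
  set K := max C (2 * M)
  set E := exp (lstar * (R - y + c' * t))
  have hM0 : 0 ≤ M := (abs_nonneg _).trans (hM x)
  have ha : a x ≤ M := (le_abs_self _).trans (hM x)
  have hK : 0 ≤ K := le_max_of_le_right (by linarith)
  have hE : 0 < E := exp_pos _
  have hlc : lstar * c' = lstar ^ 2 + M := by linarith
  have hspace : (fun z => K * min 1 (exp (-lstar * z)) * t * E)
      = fun z => K * t * E * min 1 (exp (-lstar * z)) := by
    funext z; ring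
  have hsplit : exp (lstar * (x + R - y + c' * t)) = exp (lstar * x) * E := by
    rw [← exp_add]; ring_nf
  rw [hspace, deriv_const_mul_field', deriv_const_mul_field', hsplit]
  beta_reduce
  rcases hx.lt_or_gt with hneg | hpos
  · rw [deriv_deriv_min_one_exp_neg_mul_of_neg hls.le hneg,
      min_one_exp_neg_mul_of_nonpos hls.le hneg.le, hlc]
    have hbound := min_mul_exp_le_of_nonpos (C := C) hM0 hls.le hneg.le
    have hKE : 2 * M * E ≤ K * E := by gcongr; exact le_max_right _ _
    have hgrowth : 0 ≤ K * t * E * (lstar ^ 2 + M - a x) :=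
      mul_nonneg (by positivity) (by linarith [sq_nonneg lstar])
    linarith [mul_le_mul_of_nonneg_right hbound hE.le]
  · rw [deriv_deriv_min_one_exp_neg_mul_of_pos hls.le hpos,
      min_one_exp_neg_mul_of_nonneg hls.le hpos.le, hlc]
    have hbound := min_mul_exp_le M C lstar x
    have hgrowth : 0 ≤ K * exp (-lstar * x) * t * E * (M - a x) :=
      mul_nonneg (by positivity) (by linarith)
    have hCu : C * exp (-lstar * x) * E ≤ K * exp (-lstar * x) * E := by
      gcongr; exact le_max_left _ _
    linarith [mul_le_mul_of_nonneg_right hbound hE.le]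

theorem stmt16 (a : ℝ → ℝ) (M lstar c' C R y : ℝ)
    (hM : ∀ x, |a x| ≤ M) (hls : 0 < lstar) (hMl : lstar^2 ≤ M)
    (hc' : lstar^2 - c' * lstar = -M) (hC : 0 < C) (hR : 0 < R) :
    ∀ t : ℝ, 0 < t → ∀ x : ℝ, x ≠ 0 →
      min (2 * M) (C * Real.exp (-2 * lstar * x)) * Real.exp (lstar * (x + R - y + c' * t))
        ≤ deriv (fun s => max C (2 * M) * min 1 (Real.exp (-lstar * x)) * s
              * Real.exp (lstar * (R - y + c' * s))) t
          - deriv (deriv (fun z => max C (2 * M) * min 1 (Real.exp (-lstar * z)) * t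
              * Real.exp (lstar * (R - y + c' * t)))) x
          - a x * (max C (2 * M) * min 1 (Real.exp (-lstar * x)) * t
              * Real.exp (lstar * (R - y + c' * t))) :=
  stmt16_general a M lstar c' C R y hM hls hc'
end

section
/- Let c' > 0, λ* > 0, and for each k let s_k > 0 be the smallest solution of s·exp(λ*(−y_k + c'·s)) = A, where A > 0 is a fixed constant and y_k → +∞. Then c'·s_k ∼ y_k as k → +∞, i.e. c'·s_k/y_k → 1. -/
/-!
Taking logarithms in `s e^{λ(c's - y)} = A` gives
`c' s / y = 1 + (log A - log s) / (λ y)`. As soon as `y > c'A` the equation forces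
`A ≤ s ≤ y / c'`, so `log s = O(log y) = o(y)` and the error term vanishes.
-/

open Real Filter Topology

section SolutionBounds

variable {c' lam A s y : ℝ}

lemma mul_lt_of_mul_exp_eq (hc : 0 < c') (hlam : 0 ≤ lam) (hs : 0 ≤ s)
    (h : s * exp (lam * (-y + c' * s)) = A) (hy : c' * A < y) :
    c' * s < y := by
  by_contra! hge
  have hexp : 1 ≤ exp (lam * (-y + c' * s)) := one_le_exp (by nlinarith)
  have hsA : s ≤ A := by nlinarith
  nlinarith

lemma le_of_mul_exp_eq (hlam : 0 ≤ lam) (hs : 0 ≤ s)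
    (h : s * exp (lam * (-y + c' * s)) = A) (hy : c' * s ≤ y) :
    A ≤ s := by
  have hexp : exp (lam * (-y + c' * s)) ≤ 1 := exp_le_one_iff.2 (by nlinarith)
  nlinarith

lemma div_eq_one_add_of_mul_exp_eq (hlam : lam ≠ 0) (hy : y ≠ 0) (hs : 0 < s)
    (h : s * exp (lam * (-y + c' * s)) = A) :
    c' * s / y = 1 + (log A / y - log s / y) / lam := by
  have hlog : log s + lam * (-y + c' * s) = log A := by
    rw [← h, log_mul hs.ne' (exp_ne_zero _), log_exp]
  field_simp
  linarith

end SolutionBounds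

lemma tendsto_log_div_of_le_of_le {ι : Type*} {l : Filter ι} {s y : ι → ℝ} {a C : ℝ}
    (ha : 0 < a) (hC : 0 < C) (hy : Tendsto y l atTop)
    (hlow : ∀ᶠ k in l, a ≤ s k) (hup : ∀ᶠ k in l, s k ≤ C * y k) :
    Tendsto (fun k => log (s k) / y k) l (𝓝 0) := by
  have hinv : Tendsto (fun k => (y k)⁻¹) l (𝓝 0) := hy.inv_tendsto_atTop
  have hlogy : Tendsto (fun k => log (y k) / y k) l (𝓝 0) :=
    isLittleO_log_id_atTop.tendsto_div_nhds_zero.comp hy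
  have hlower : Tendsto (fun k => log a * (y k)⁻¹) l (𝓝 0) := by
    simpa using hinv.const_mul (log a)
  have hupper : Tendsto (fun k => log C * (y k)⁻¹ + log (y k) / y k) l (𝓝 0) := by
    simpa using (hinv.const_mul (log C)).add hlogy
  refine tendsto_of_tendsto_of_tendsto_of_le_of_le' hlower hupper ?_ ?_
  · filter_upwards [hlow, hy.eventually_gt_atTop 0] with k hak hyk
    rw [← div_eq_mul_inv]
    gcongr
  · filter_upwards [hlow, hup, hy.eventually_gt_atTop 0] with k hak hsk hyk
    have hlogs : log (s k) ≤ log C + log (y k) := by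
      rw [← log_mul hC.ne' hyk.ne']
      exact log_le_log (ha.trans_le hak) hsk
    rw [← div_eq_mul_inv, ← add_div]
    gcongr

theorem stmt17 (c' lstar A : ℝ) (hc : 0 < c') (hls : 0 < lstar) (hA : 0 < A)
    (y s : ℕ → ℝ) (hy : Tendsto y atTop atTop)
    (hs : ∀ k, 0 < s k ∧ s k * Real.exp (lstar * (-(y k) + c' * s k)) = A ∧
      ∀ s' : ℝ, 0 < s' → s' * Real.exp (lstar * (-(y k) + c' * s')) = A → s k ≤ s') :
    Tendsto (fun k => c' * s k / y k) atTop (nhds 1) := by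
  have hlarge : ∀ᶠ k in atTop, c' * A < y k := hy.eventually_gt_atTop _
  have hsy : ∀ᶠ k in atTop, c' * s k < y k := hlarge.mono fun k hk =>
    mul_lt_of_mul_exp_eq hc hls.le (hs k).1.le (hs k).2.1 hk
  have hAs : ∀ᶠ k in atTop, A ≤ s k := hsy.mono fun k hk =>
    le_of_mul_exp_eq hls.le (hs k).1.le (hs k).2.1 hk.le
  have hsup : ∀ᶠ k in atTop, s k ≤ c'⁻¹ * y k := hsy.mono fun k hk => by
    rw [← div_eq_inv_mul, le_div_iff₀ hc, mul_comm]
    exact hk.le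
  have hlog := tendsto_log_div_of_le_of_le hA (inv_pos.2 hc) hy hAs hsup
  have hlim : Tendsto (fun k => 1 + (log A / y k - log (s k) / y k) / lstar) atTop (𝓝 1) := by
    simpa [div_eq_mul_inv] using (((hy.inv_tendsto_atTop.const_mul (log A)).sub hlog).div_const lstar).const_add 1
  refine hlim.congr' ?_
  filter_upwards [hy.eventually_gt_atTop 0] with k hk
  exact (div_eq_one_add_of_mul_exp_eq hls.ne' hk.ne' (hs k).1 (hs k).2.1).symm
end
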